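/- For every function u : ℤ³ → ℂ with u(0) = 0 and Σ_{α ≠ 0} |α|·|u(α)|² < ∞, and every k ∈ ℤ³ with k ≠ 0, one has Σ_{α ∈ ℤ³, |α| ≥ 2|k|} |α|·|u(α)|·|u(k−α)| ≤ √2 · Σ_{α ≠ 0} |α|·|u(α)|². -/

import Mathlib

/-!
On `|α| ≥ 2|k|` the triangle inequality `|α| ≤ |k| + |k - α|` gives `|α| ≤ 2|k - α|`.
The weighted AM-GM inequality `|α| x y ≤ (√2/2)(|α| x² + |α| y²/2)` then bounds each
term by `(√2/2)(|α||u α|² + |k - α||u (k - α)|²)`, and since `α ↦ k - α` is a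
bijection of `ℤ³`, both halves sum to `∑ |α||u α|²`.
-/

/-- The Euclidean norm of a lattice point in `ℤ³`. -/
noncomputable def znorm (a : Fin 3 → ℤ) : ℝ := Real.sqrt (∑ i, ((a i : ℝ)) ^ 2)

lemma znorm_nonneg (a : Fin 3 → ℤ) : 0 ≤ znorm a := Real.sqrt_nonneg _

lemma znorm_zero : znorm 0 = 0 := by simp [znorm]

lemma znorm_eq_norm_toLp (a : Fin 3 → ℤ) :
    znorm a = ‖(WithLp.toLp 2 (fun i => (a i : ℝ)) : EuclideanSpace ℝ (Fin 3))‖ := by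
  simp only [znorm, EuclideanSpace.norm_eq, Real.norm_eq_abs, sq_abs]

lemma znorm_sub_le (a b : Fin 3 → ℤ) : znorm (a - b) ≤ znorm a + znorm b := by
  simp only [znorm_eq_norm_toLp, Pi.sub_apply, Int.cast_sub]
  exact norm_sub_le (WithLp.toLp 2 (fun i => (a i : ℝ)) : EuclideanSpace ℝ (Fin 3))
    (WithLp.toLp 2 fun i => (b i : ℝ))

lemma znorm_le_two_mul_znorm_sub {k a : Fin 3 → ℤ} (ha : 2 * znorm k ≤ znorm a) :
    znorm a ≤ 2 * znorm (k - a) := by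
  have := znorm_sub_le k (k - a)
  rw [sub_sub_cancel] at this
  linarith

lemma mul_mul_le_of_le_two_mul {A B : ℝ} (x y : ℝ) (hA : 0 ≤ A) (hAB : A ≤ 2 * B) :
    A * x * y ≤ Real.sqrt 2 / 2 * (A * x ^ 2 + B * y ^ 2) := by
  set s := Real.sqrt 2
  have hs : s * s = 2 := Real.mul_self_sqrt zero_le_two
  have hs0 : 0 ≤ s := Real.sqrt_nonneg 2
  have hsq := mul_nonneg (mul_nonneg hs0 hA) (sq_nonneg (s * x - y))
  have hB := mul_le_mul_of_nonneg_left (mul_le_mul_of_nonneg_right hAB (sq_nonneg y)) hs0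
  linear_combination (1 / 4) * hsq + (1 / 4) * hB + (1 / 4 * s * A * x ^ 2 - 1 / 2 * A * x * y) * hs

lemma hasSum_add_comp_sub_left {G α : Type*} [AddGroup G] [AddCommMonoid α] [TopologicalSpace α]
    [ContinuousAdd α] {g : G → α} {S : α} (hg : HasSum g S) (k : G) :
    HasSum (fun a => g a + g (k - a)) (S + S) :=
  hg.add ((Equiv.subLeft k).hasSum_iff.2 hg)

lemma summable_subtype_and_tsum_le_of_le {β : Type*} {f h : β → ℝ} {T : ℝ} {p : β → Prop}
    (hh : HasSum h T) (hh0 : ∀ a, 0 ≤ h a) (hf0 : ∀ a, p a → 0 ≤ f a)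
    (hfh : ∀ a, p a → f a ≤ h a) :
    Summable (fun a : {a // p a} => f a) ∧ ∑' a : {a // p a}, f a ≤ T := by
  have hhs : Summable (fun a : {a // p a} => h a) := hh.summable.subtype {a | p a}
  have hfs : Summable (fun a : {a // p a} => f a) :=
    hhs.of_nonneg_of_le (fun a => hf0 a.1 a.2) (fun a => hfh a.1 a.2)
  refine ⟨hfs, ?_⟩
  calc ∑' a : {a // p a}, f a ≤ ∑' a : {a // p a}, h a :=
        hfs.tsum_le_tsum (fun a => hfh a.1 a.2) hhs
    _ ≤ ∑' a, h a := Summable.tsum_subtype_le h {a | p a} hh0 hh.summable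
    _ = T := hh.tsum_eq

theorem cauchy_schwarz_high_piece_general
    (u : (Fin 3 → ℤ) → ℂ)
    (hsum : Summable (fun α : {a : Fin 3 → ℤ // a ≠ 0} => znorm α.1 * ‖u α.1‖ ^ 2))
    (k : Fin 3 → ℤ) :
    Summable (fun α : {a : Fin 3 → ℤ // 2 * znorm k ≤ znorm a} =>
      znorm α.1 * ‖u α.1‖ * ‖u (k - α.1)‖) ∧
    (∑' α : {a : Fin 3 → ℤ // 2 * znorm k ≤ znorm a},
        znorm α.1 * ‖u α.1‖ * ‖u (k - α.1)‖)
      ≤ Real.sqrt 2 * (∑' α : {a : Fin 3 → ℤ // a ≠ 0}, znorm α.1 * ‖u α.1‖ ^ 2) := by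
  set g : (Fin 3 → ℤ) → ℝ := fun a => znorm a * ‖u a‖ ^ 2
  have hg0 : ∀ a, 0 ≤ g a := fun a => by positivity [znorm_nonneg a]
  have hg : HasSum g (∑' α : {a : Fin 3 → ℤ // a ≠ 0}, g α.1) :=
    (hasSum_subtype_iff_of_support_subset fun a ha (h0 : a = 0) =>
      ha (by simp [g, h0, znorm_zero])).1 hsum.hasSum
  have hbound := (hasSum_add_comp_sub_left hg k).mul_left (Real.sqrt 2 / 2)
  obtain ⟨hsummable, hle⟩ := summable_subtype_and_tsum_le_of_le hbound
    (fun a => by positivity [hg0 a, hg0 (k - a)]) (fun a _ => by positivity [znorm_nonneg a])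
    fun a ha => mul_mul_le_of_le_two_mul _ _ (znorm_nonneg a) (znorm_le_two_mul_znorm_sub ha)
  exact ⟨hsummable, hle.trans_eq (by ring)⟩

/-- For `u : ℤ³ → ℂ` with `u 0 = 0` and summable `∑_{α ≠ 0} |α||u α|²`, and `k ≠ 0`,
the sum `∑_{|α| ≥ 2|k|} |α||u α||u (k−α)|` converges and is at most
`√2·∑_{α ≠ 0} |α||u α|²`. -/
theorem cauchy_schwarz_high_piece
    (u : (Fin 3 → ℤ) → ℂ) (hu0 : u 0 = 0)
    (hsum : Summable (fun α : {a : Fin 3 → ℤ // a ≠ 0} => znorm α.1 * ‖u α.1‖ ^ 2))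
    (k : Fin 3 → ℤ) (hk : k ≠ 0) :
    Summable (fun α : {a : Fin 3 → ℤ // 2 * znorm k ≤ znorm a} =>
      znorm α.1 * ‖u α.1‖ * ‖u (k - α.1)‖) ∧
    (∑' α : {a : Fin 3 → ℤ // 2 * znorm k ≤ znorm a},
        znorm α.1 * ‖u α.1‖ * ‖u (k - α.1)‖)
      ≤ Real.sqrt 2 * (∑' α : {a : Fin 3 → ℤ // a ≠ 0}, znorm α.1 * ‖u α.1‖ ^ 2) :=
  cauchy_schwarz_high_piece_general u hsum k
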